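/- Suppose F is nonempty, p_max ≥ q_max, Q(O) > p_max and ε > 0. Suppose A ⊆ O satisfies p_max < Q(A) ≤ (1+ε)·OPT1 and p_max − ε·OPT1 < Q(O \ A) < p_max. Then there exists a feasible schedule π (with makespan P(F) + Q(O) + p_max − Q(O \ A)) such that makespan(π) < (1+ε)·makespan(σ) for every feasible schedule σ. -/

import Mathlib

/-!
Machine `M1` alone has to process every job, so every feasible schedule has makespan at least
`P(F) + Q(O)`. Conversely, put `B = O \ A` and `d = p_max`, and run the three blocks `F`, `A`, `B`
back to back on every machine: on `M1` in the order `F, A, B`; on `M2` first `B`, then from time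
`d` on `F, A`; on `M3` first `A, B`, then from time `Q(A) + d` on `F`. Since no job is longer than
`d` and `Q(B) ≤ d ≤ Q(A), P(F)`, the blocks on a machine do not overlap and the three operations
of a job are at least `d` apart, so this schedule is feasible with makespan `P(F) + Q(A) + d`.
Finally `d < Q(B) + ε·OPT1 ≤ Q(B) + ε·Q(O)` gives `P(F) + Q(A) + d < (1 + ε)(P(F) + Q(O))`.
-/

open Finset

noncomputable section

def jobTime {J : Type*} [DecidableEq J] (F : Finset J) (p q : J → ℝ) (j : J) : ℝ :=
  if j ∈ F then p j else q j

/-- `S j i` is the start time of job `j` on machine `i`; machines `M1, M2, M3` are `0, 1, 2`. -/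
def Feasible {J : Type*} [DecidableEq J] (F O : Finset J) (p q : J → ℝ)
    (S : J → Fin 3 → ℝ) : Prop :=
  (∀ j ∈ F ∪ O, ∀ i : Fin 3, 0 ≤ S j i) ∧
  (∀ i : Fin 3, ∀ j ∈ F ∪ O, ∀ k ∈ F ∪ O, j ≠ k →
    S j i + jobTime F p q j ≤ S k i ∨ S k i + jobTime F p q k ≤ S j i) ∧
  (∀ j ∈ F ∪ O, ∀ i i' : Fin 3, i ≠ i' →
    S j i + jobTime F p q j ≤ S j i' ∨ S j i' + jobTime F p q j ≤ S j i) ∧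
  (∀ j ∈ F, S j 0 + p j ≤ S j 1 ∧ S j 1 + p j ≤ S j 2)

def makespan {J : Type*} [DecidableEq J] (F O : Finset J) (p q : J → ℝ)
    (S : J → Fin 3 → ℝ) : ℝ :=
  sSup {x : ℝ | ∃ j ∈ F ∪ O, ∃ i : Fin 3, x = S j i + jobTime F p q j}

section Intervals

variable {ι : Type*} [DecidableEq ι]

theorem add_sum_le_of_pairwise_disjoint {s : Finset ι} (hs : s.Nonempty) {t S : ι → ℝ}
    {a M : ℝ} (ht : ∀ j ∈ s, 0 < t j) (ha : ∀ j ∈ s, a ≤ S j) (hM : ∀ j ∈ s, S j + t j ≤ M)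
    (hd : ∀ j ∈ s, ∀ k ∈ s, j ≠ k → S j + t j ≤ S k ∨ S k + t k ≤ S j) :
    a + ∑ j ∈ s, t j ≤ M := by
  induction s using Finset.induction_on_max_value S generalizing M with
  | empty => simp at hs
  | insert j s hjs hmax ih =>
    have hj := mem_insert_self j s
    have hsub : s ⊆ insert j s := subset_insert j s
    rw [sum_insert hjs]
    rcases s.eq_empty_or_nonempty with rfl | hs'
    · simp only [sum_empty]
      linarith [ha j hj, hM j hj]
    -- as `j` starts last and has positive length, every other job ends before `j` starts
    have hbefore : ∀ k ∈ s, S k + t k ≤ S j := fun k hk =>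
      ((hd k (hsub hk) j hj (ne_of_mem_of_not_mem hk hjs)).resolve_right
        (by linarith [hmax k hk, ht j hj]))
    have := ih hs' (fun k hk => ht k (hsub hk)) (fun k hk => ha k (hsub hk)) hbefore
      (fun k hk l hl => hd k (hsub hk) l (hsub hl))
    linarith [hM j hj]

theorem exists_back_to_back (s : Finset ι) {t : ι → ℝ} (ht : ∀ j ∈ s, 0 ≤ t j) :
    ∃ x : ι → ℝ, (∀ j ∈ s, 0 ≤ x j ∧ x j + t j ≤ ∑ k ∈ s, t k) ∧
      ∀ j ∈ s, ∀ k ∈ s, j ≠ k → x j + t j ≤ x k ∨ x k + t k ≤ x j := by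
  induction s using Finset.induction_on with
  | empty => exact ⟨0, by simp, by simp⟩
  | insert a s has ih =>
    obtain ⟨x, hwin, hseq⟩ := ih fun j hj => ht j (mem_insert_of_mem hj)
    have hta := ht a (mem_insert_self a s)
    have hx : ∀ j ∈ s, Function.update x a (∑ k ∈ s, t k) j = x j := fun j hj =>
      Function.update_of_ne (ne_of_mem_of_not_mem hj has) _ _
    refine ⟨Function.update x a (∑ k ∈ s, t k), fun j hj => ?_, fun j hj k hk hjk => ?_⟩
    · rw [sum_insert has]
      rcases mem_insert.1 hj with rfl | hj
      · simp only [Function.update_self]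
        exact ⟨sum_nonneg fun k hk => ht k (mem_insert_of_mem hk), by linarith⟩
      · rw [hx j hj]
        exact ⟨(hwin j hj).1, by linarith [(hwin j hj).2]⟩
    · rcases mem_insert.1 hj with rfl | hjs <;> rcases mem_insert.1 hk with rfl | hks
      · exact absurd rfl hjk
      · rw [hx k hks, Function.update_self]
        exact Or.inr (hwin k hks).2
      · rw [hx j hjs, Function.update_self]
        exact Or.inl (hwin j hjs).2
      · rw [hx j hjs, hx k hks]
        exact hseq j hjs k hks hjk

theorem exists_blockwise_back_to_back {β : Type*} [DecidableEq β] (s : Finset ι) (blk : ι → β)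
    {t : ι → ℝ} (ht : ∀ j ∈ s, 0 ≤ t j) :
    ∃ u : ι → ℝ, (∀ j ∈ s, 0 ≤ u j ∧ u j + t j ≤ ∑ k ∈ s with blk k = blk j, t k) ∧
      ∀ j ∈ s, ∀ k ∈ s, j ≠ k → blk j = blk k → u j + t j ≤ u k ∨ u k + t k ≤ u j := by
  choose x hwin hseq using fun b =>
    exists_back_to_back (s.filter (blk · = b)) fun j hj => ht j (mem_filter.1 hj).1
  refine ⟨fun j => x (blk j) j, fun j hj => hwin _ j (mem_filter.2 ⟨hj, rfl⟩),
    fun j hj k hk hjk hb => ?_⟩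
  simp only [hb]
  exact hseq _ j (mem_filter.2 ⟨hj, hb⟩) k (mem_filter.2 ⟨hk, rfl⟩) hjk

end Intervals

section Schedules

variable {J : Type*} [DecidableEq J] {F O : Finset J} {p q : J → ℝ}

theorem jobTime_pos (hp : ∀ j ∈ F, 0 < p j) (hq : ∀ j ∈ O, 0 < q j) :
    ∀ j ∈ F ∪ O, 0 < jobTime F p q j := by
  intro j hj
  by_cases hjF : j ∈ F
  · simpa [jobTime, hjF] using hp j hjF
  · simpa [jobTime, hjF] using hq j ((mem_union.1 hj).resolve_left hjF)

theorem sum_jobTime_left : ∑ j ∈ F, jobTime F p q j = ∑ j ∈ F, p j :=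
  sum_congr rfl fun _ hj => if_pos hj

theorem sum_jobTime_of_disjoint {X : Finset J} (h : Disjoint F X) :
    ∑ j ∈ X, jobTime F p q j = ∑ j ∈ X, q j :=
  sum_congr rfl fun _ hj => if_neg (disjoint_right.1 h hj)

theorem sum_jobTime_union (h : Disjoint F O) :
    ∑ j ∈ F ∪ O, jobTime F p q j = ∑ j ∈ F, p j + ∑ j ∈ O, q j := by
  rw [sum_union h, sum_jobTime_left, sum_jobTime_of_disjoint h]

theorem bddAbove_completionTimes (S : J → Fin 3 → ℝ) :
    BddAbove {x : ℝ | ∃ j ∈ F ∪ O, ∃ i : Fin 3, x = S j i + jobTime F p q j} := by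
  refine (((F ∪ O).finite_toSet.prod (Set.finite_univ (α := Fin 3))).image
    fun ji => S ji.1 ji.2 + jobTime F p q ji.1).subset ?_ |>.bddAbove
  rintro x ⟨j, hj, i, rfl⟩
  exact ⟨(j, i), ⟨hj, trivial⟩, rfl⟩

theorem le_makespan (S : J → Fin 3 → ℝ) {j : J} (hj : j ∈ F ∪ O) (i : Fin 3) :
    S j i + jobTime F p q j ≤ makespan F O p q S :=
  le_csSup (bddAbove_completionTimes S) ⟨j, hj, i, rfl⟩

theorem makespan_le {S : J → Fin 3 → ℝ} {M : ℝ} (hne : (F ∪ O).Nonempty)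
    (h : ∀ j ∈ F ∪ O, ∀ i, S j i + jobTime F p q j ≤ M) : makespan F O p q S ≤ M := by
  obtain ⟨j, hj⟩ := hne
  refine csSup_le ⟨_, j, hj, 0, rfl⟩ ?_
  rintro x ⟨k, hk, i, rfl⟩
  exact h k hk i

theorem Feasible.add_sum_le_makespan {S : J → Fin 3 → ℝ} (hS : Feasible F O p q S)
    (hp : ∀ j ∈ F, 0 < p j) (hq : ∀ j ∈ O, 0 < q j) (i : Fin 3) {s : Finset J}
    (hs : s ⊆ F ∪ O) (hsne : s.Nonempty) {a : ℝ} (ha : ∀ j ∈ s, a ≤ S j i) :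
    a + ∑ j ∈ s, jobTime F p q j ≤ makespan F O p q S :=
  add_sum_le_of_pairwise_disjoint hsne (fun j hj => jobTime_pos hp hq j (hs hj)) ha
    (fun _ hj => le_makespan S (hs hj) i) fun j hj k hk => hS.2.1 i j (hs hj) k (hs hk)

/-- Block `b` occupies the window `[off b i, off b i + L b]` on machine `i`, and job `j` of
block `blk j` runs at the offset `u j` inside the window of its block on every machine. -/
theorem feasible_of_blocks {β : Type*} (blk : J → β) (u : J → ℝ) (off : β → Fin 3 → ℝ)
    (L : β → ℝ) (d : ℝ) (hu : ∀ j ∈ F ∪ O, 0 ≤ u j ∧ u j + jobTime F p q j ≤ L (blk j))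
    (hseq : ∀ j ∈ F ∪ O, ∀ k ∈ F ∪ O, j ≠ k → blk j = blk k →
      u j + jobTime F p q j ≤ u k ∨ u k + jobTime F p q k ≤ u j)
    (hoff : ∀ b i, 0 ≤ off b i)
    (hsep : ∀ i b b', b ≠ b' → off b i + L b ≤ off b' i ∨ off b' i + L b' ≤ off b i)
    (hgap : ∀ b i i', i ≠ i' → off b i + d ≤ off b i' ∨ off b i' + d ≤ off b i)
    (hd : ∀ j ∈ F ∪ O, jobTime F p q j ≤ d)
    (hflow : ∀ j ∈ F,
      off (blk j) 0 + p j ≤ off (blk j) 1 ∧ off (blk j) 1 + p j ≤ off (blk j) 2) :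
    Feasible F O p q fun j i => off (blk j) i + u j := by
  refine ⟨fun j hj i => add_nonneg (hoff _ i) (hu j hj).1, fun i j hj k hk hjk => ?_,
    fun j hj i i' hii' => ?_, fun j hj => ?_⟩
  · by_cases hb : blk j = blk k
    · dsimp only
      rw [hb]
      rcases hseq j hj k hk hjk hb with h | h
      · exact Or.inl (by linarith)
      · exact Or.inr (by linarith)
    · have := hu j hj
      have := hu k hk
      rcases hsep i _ _ hb with h | h
      · exact Or.inl (by linarith)
      · exact Or.inr (by linarith)
  · have := hd j hj
    rcases hgap (blk j) i i' hii' with h | h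
    · exact Or.inl (by linarith)
    · exact Or.inr (by linarith)
  · have := hflow j hj
    constructor <;> linarith

theorem jobTime_le {d : ℝ} (hpd : ∀ j ∈ F, p j ≤ d) (hqd : ∀ j ∈ O, q j ≤ d) :
    ∀ j ∈ F ∪ O, jobTime F p q j ≤ d := by
  intro j hj
  by_cases hjF : j ∈ F
  · simpa [jobTime, hjF] using hpd j hjF
  · simpa [jobTime, hjF] using hqd j ((mem_union.1 hj).resolve_left hjF)

def blockIndex (F A : Finset J) (j : J) : Fin 3 :=
  if j ∈ F then 0 else if j ∈ A then 1 else 2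

theorem sum_jobTime_blockIndex {A : Finset J} (hdisj : Disjoint F O) (hAO : A ⊆ O) (b : Fin 3) :
    ∑ k ∈ F ∪ O with blockIndex F A k = b, jobTime F p q k =
      ![∑ j ∈ F, p j, ∑ j ∈ A, q j, ∑ j ∈ O \ A, q j] b := by
  have hFA : Disjoint F A := hdisj.mono_right hAO
  fin_cases b
  · have : (F ∪ O).filter (blockIndex F A · = 0) = F := by
      ext k
      rw [mem_filter, mem_union, blockIndex]
      by_cases hkF : k ∈ F <;> by_cases hkA : k ∈ A <;> simp [hkF, hkA]
    show ∑ k ∈ F ∪ O with blockIndex F A k = 0, jobTime F p q k = ∑ j ∈ F, p j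
    rw [this, sum_jobTime_left]
  · have : (F ∪ O).filter (blockIndex F A · = 1) = A := by
      ext k
      rw [mem_filter, mem_union, blockIndex]
      by_cases hkF : k ∈ F <;> by_cases hkA : k ∈ A <;> simp [hkF, hkA]
      · exact disjoint_left.1 hFA hkF hkA
      · exact hAO hkA
    show ∑ k ∈ F ∪ O with blockIndex F A k = 1, jobTime F p q k = ∑ j ∈ A, q j
    rw [this, sum_jobTime_of_disjoint hFA]
  · have : (F ∪ O).filter (blockIndex F A · = 2) = O \ A := by
      ext k
      rw [mem_filter, mem_union, blockIndex]
      by_cases hkF : k ∈ F <;> by_cases hkA : k ∈ A <;> simp [hkF, hkA]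
      exact disjoint_left.1 hdisj hkF
    show ∑ k ∈ F ∪ O with blockIndex F A k = 2, jobTime F p q k = ∑ j ∈ O \ A, q j
    rw [this, sum_jobTime_of_disjoint (hdisj.mono_right sdiff_subset)]

theorem exists_feasible_makespan_eq (A : Finset J) (d : ℝ) (hdisj : Disjoint F O)
    (hp : ∀ j ∈ F, 0 < p j) (hq : ∀ j ∈ O, 0 < q j) (hF : F.Nonempty)
    (hpd : ∀ j ∈ F, p j ≤ d) (hqd : ∀ j ∈ O, q j ≤ d) (hAO : A ⊆ O)
    (hdP : d ≤ ∑ j ∈ F, p j) (hdA : d ≤ ∑ j ∈ A, q j) (hBd : ∑ j ∈ O \ A, q j ≤ d) :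
    ∃ π : J → Fin 3 → ℝ, Feasible F O p q π ∧
      makespan F O p q π = ∑ j ∈ F, p j + ∑ j ∈ A, q j + d := by
  set P := ∑ j ∈ F, p j
  set QA := ∑ j ∈ A, q j
  set QB := ∑ j ∈ O \ A, q j
  have hFA : Disjoint F A := hdisj.mono_right hAO
  have hQB : 0 ≤ QB := sum_nonneg fun j hj => (hq j (sdiff_subset hj)).le
  -- row `b` holds the start times of block `b` (`F`, `A`, `O \ A`) on `M1`, `M2`, `M3`
  let off : Fin 3 → Fin 3 → ℝ := ![![0, d, QA + d], ![P, d + P, 0], ![P + QA, 0, QA]]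
  let L : Fin 3 → ℝ := ![P, QA, QB]
  obtain ⟨u, hu, hseq⟩ := exists_blockwise_back_to_back (F ∪ O) (blockIndex F A)
    fun j hj => (jobTime_pos hp hq j hj).le
  simp only [sum_jobTime_blockIndex hdisj hAO] at hu
  have hend : ∀ b i, off b i + L b ≤ P + QA + d := by
    intro b i
    fin_cases b <;> fin_cases i <;> simp [off, L] <;> linarith
  have hfeas : Feasible F O p q fun j i => off (blockIndex F A j) i + u j := by
    refine feasible_of_blocks (blockIndex F A) u off L d hu hseq ?_ ?_ ?_ (jobTime_le hpd hqd) ?_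
    · intro b i
      fin_cases b <;> fin_cases i <;> simp [off] <;> linarith
    · intro i b b' hbb'
      fin_cases i <;> fin_cases b <;> fin_cases b' <;> simp [off, L] at hbb' ⊢ <;>
        first | (left; linarith) | (right; linarith)
    · intro b i i' hii'
      fin_cases b <;> fin_cases i <;> fin_cases i' <;> simp [off] at hii' ⊢ <;>
        first | (left; linarith) | (right; linarith)
    · intro j hj
      rw [show blockIndex F A j = 0 from if_pos hj]
      change 0 + p j ≤ d ∧ d + p j ≤ QA + d
      constructor <;> linarith [hpd j hj]
  refine ⟨_, hfeas, le_antisymm (makespan_le (hF.mono subset_union_left) ?_) ?_⟩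
  · intro j hj i
    linarith [hend (blockIndex F A j) i, (hu j hj).2]
  · have hM2 : ∀ j ∈ F ∪ A, d ≤ off (blockIndex F A j) 1 + u j := by
      intro j hj
      have hu0 := (hu j (union_subset_union_right hAO hj)).1
      rcases mem_union.1 hj with hjF | hjA
      · rw [show blockIndex F A j = 0 from if_pos hjF]
        change d ≤ d + u j
        linarith
      · rw [show blockIndex F A j = 1 from (if_neg (disjoint_right.1 hFA hjA)).trans (if_pos hjA)]
        change d ≤ d + P + u j
        linarith
    have := hfeas.add_sum_le_makespan hp hq 1 (union_subset_union_right hAO)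
      (hF.mono subset_union_left) hM2
    rw [sum_jobTime_union hFA] at this
    linarith

end Schedules

theorem stmt7_general {J : Type*} [DecidableEq J] (F O : Finset J) (p q : J → ℝ)
    (hdisj : Disjoint F O)
    (hp : ∀ j ∈ F, 0 < p j) (hq : ∀ j ∈ O, 0 < q j)
    (hF : F.Nonempty) (hO : O.Nonempty)
    (hpq : O.sup' hO q ≤ F.sup' hF p)
    (OPT1 : ℝ)
    (hOPT1 : IsLeast {x : ℝ | ∃ X ⊆ O, x = (∑ j ∈ X, q j) ∧ F.sup' hF p < x} OPT1)
    (ε : ℝ) (hε : 0 < ε)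
    (A : Finset J) (hAO : A ⊆ O)
    (hA0 : F.sup' hF p < ∑ j ∈ A, q j)
    (hA2 : F.sup' hF p - ε * OPT1 < ∑ j ∈ O \ A, q j)
    (hA3 : (∑ j ∈ O \ A, q j) < F.sup' hF p) :
    ∃ π : J → Fin 3 → ℝ, Feasible F O p q π ∧
      makespan F O p q π
        = (∑ j ∈ F, p j) + (∑ j ∈ O, q j) + F.sup' hF p - (∑ j ∈ O \ A, q j) ∧
      ∀ σ : J → Fin 3 → ℝ, Feasible F O p q σ →
        makespan F O p q π < (1 + ε) * makespan F O p q σ := by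
  have hsplit : ∑ j ∈ O \ A, q j + ∑ j ∈ A, q j = ∑ j ∈ O, q j := sum_sdiff hAO
  have hOPT1_le : OPT1 ≤ ∑ j ∈ O, q j := by
    obtain ⟨X, hXO, rfl, -⟩ := hOPT1.1
    exact sum_le_sum_of_subset_of_nonneg hXO fun j hj _ => (hq j hj).le
  have hpmax_le : F.sup' hF p ≤ ∑ j ∈ F, p j :=
    sup'_le hF p fun j hj => single_le_sum (fun k hk => (hp k hk).le) hj
  obtain ⟨π, hπ, hπ_eq⟩ := exists_feasible_makespan_eq A _ hdisj hp hq hF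
    (fun j hj => le_sup' p hj) (fun j hj => (le_sup' q hj).trans hpq) hAO hpmax_le hA0.le hA3.le
  refine ⟨π, hπ, by rw [hπ_eq]; linarith, fun σ hσ => ?_⟩
  have hσ_load : ∑ j ∈ F, p j + ∑ j ∈ O, q j ≤ makespan F O p q σ := by
    simpa [sum_jobTime_union hdisj] using
      hσ.add_sum_le_makespan hp hq 0 subset_rfl (hF.mono subset_union_left) fun j hj => hσ.1 j hj 0
  have hεP : 0 ≤ ε * ∑ j ∈ F, p j :=
    mul_nonneg hε.le (sum_nonneg fun j hj => (hp j hj).le)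
  calc makespan F O p q π = ∑ j ∈ F, p j + ∑ j ∈ A, q j + F.sup' hF p := hπ_eq
    _ < (1 + ε) * (∑ j ∈ F, p j + ∑ j ∈ O, q j) := by
      linarith [mul_le_mul_of_nonneg_left hOPT1_le hε.le]
    _ ≤ (1 + ε) * makespan F O p q σ := by gcongr

/-- Lemma 3.6: if `p_max ≥ q_max`, `Q(O) > p_max`, `ε > 0` and `A ⊆ O` satisfies
`p_max < Q(A) ≤ (1+ε)·OPT1` and `p_max − ε·OPT1 < Q(O \ A) < p_max`, then there is a
feasible schedule of makespan `P(F) + Q(O) + p_max − Q(O \ A)` whose makespan is within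
a factor `1 + ε` of the optimum. -/
theorem stmt7 {J : Type*} [DecidableEq J] (F O : Finset J) (p q : J → ℝ)
    (hdisj : Disjoint F O)
    (hp : ∀ j ∈ F, 0 < p j) (hq : ∀ j ∈ O, 0 < q j)
    (hF : F.Nonempty) (hO : O.Nonempty)
    (hpq : O.sup' hO q ≤ F.sup' hF p)
    (hQO : F.sup' hF p < ∑ j ∈ O, q j)
    (OPT1 : ℝ)
    (hOPT1 : IsLeast {x : ℝ | ∃ X ⊆ O, x = (∑ j ∈ X, q j) ∧ F.sup' hF p < x} OPT1)
    (ε : ℝ) (hε : 0 < ε)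
    (A : Finset J) (hAO : A ⊆ O)
    (hA0 : F.sup' hF p < ∑ j ∈ A, q j)
    (hA1 : (∑ j ∈ A, q j) ≤ (1 + ε) * OPT1)
    (hA2 : F.sup' hF p - ε * OPT1 < ∑ j ∈ O \ A, q j)
    (hA3 : (∑ j ∈ O \ A, q j) < F.sup' hF p) :
    ∃ π : J → Fin 3 → ℝ, Feasible F O p q π ∧
      makespan F O p q π
        = (∑ j ∈ F, p j) + (∑ j ∈ O, q j) + F.sup' hF p - (∑ j ∈ O \ A, q j) ∧
      ∀ σ : J → Fin 3 → ℝ, Feasible F O p q σ →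
        makespan F O p q π < (1 + ε) * makespan F O p q σ :=
  stmt7_general F O p q hdisj hp hq hF hO hpq OPT1 hOPT1 ε hε A hAO hA0 hA2 hA3

end
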